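/- arXiv:2409.10573 — 5 statements merged into one kernel-verified Lean document; each statement's English description precedes it below -/
import Mathlib

section
/- Let F be a field and P ∈ F[X₁,…,Xₙ] a polynomial such that P(u) = 0 for every u ∈ {0,1}ⁿ with u ≠ (0,…,0), and P(0,…,0) ≠ 0. Then the total degree of P is at least n. -/
/-!
Sum `P` over the cube with alternating signs, `∑ u, (-1) ^ |u| * P(u)`. On a monomial `X ^ d`
this sum factorises as `∏ i, (0 ^ d i - 1)`, which vanishes as soon as some variable is missing
from `X ^ d`; so the alternating sum of a polynomial of total degree `< n` is zero. If `P`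
vanishes on the cube away from the origin, the alternating sum is `P(0) ≠ 0`.
-/

open Finset

namespace MvPolynomial

variable {R σ : Type*} [CommRing R]

def cubePoint (u : σ → Bool) : σ → R := fun i => if u i then 1 else 0

theorem cubePoint_ne_zero [Nontrivial R] {u : σ → Bool} (hu : u ≠ fun _ => false) :
    cubePoint (R := R) u ≠ 0 := by
  obtain ⟨i, hi⟩ := Function.ne_iff.1 hu
  exact fun h => by simpa [cubePoint, hi] using congrFun h i

variable [Fintype σ]

theorem exists_eq_zero_of_mem_support_of_totalDegree_lt {P : MvPolynomial σ R} {d : σ →₀ ℕ}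
    (hd : d ∈ P.support) (hP : P.totalDegree < Fintype.card σ) : ∃ i, d i = 0 := by
  by_contra! h
  have : Fintype.card σ ≤ ∑ i, d i := by
    simpa using sum_le_sum fun i (_ : i ∈ univ) => Nat.one_le_iff_ne_zero.2 (h i)
  have := le_totalDegree hd
  rw [Finsupp.sum_fintype _ _ fun _ => rfl] at this
  omega

def cubeSign (u : σ → Bool) : R := ∏ i, if u i then -1 else 1

variable [DecidableEq σ]

noncomputable def alternatingCubeSum (P : MvPolynomial σ R) : R :=
  ∑ u : σ → Bool, cubeSign u * eval (cubePoint u) P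

theorem alternatingCubeSum_eq (P : MvPolynomial σ R) :
    alternatingCubeSum P = ∑ d ∈ P.support, P.coeff d * ∏ i, ((0 : R) ^ d i - 1) := by
  have hfactor (k : ℕ) : ∑ b : Bool, (if b then (-1 : R) else 1) * (if b then 1 else 0) ^ k =
      (0 : R) ^ k - 1 := by
    simp [sub_eq_neg_add]
  simp_rw [← hfactor, Fintype.prod_sum, alternatingCubeSum, eval_eq', mul_sum, cubeSign,
    cubePoint]
  rw [sum_comm]
  refine sum_congr rfl fun d _ => sum_congr rfl fun u _ => ?_
  rw [prod_mul_distrib]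
  ring

theorem alternatingCubeSum_eq_zero_of_totalDegree_lt {P : MvPolynomial σ R}
    (hP : P.totalDegree < Fintype.card σ) : alternatingCubeSum P = 0 := by
  rw [alternatingCubeSum_eq]
  refine sum_eq_zero fun d hd => ?_
  obtain ⟨i, hi⟩ := exists_eq_zero_of_mem_support_of_totalDegree_lt hd hP
  rw [prod_eq_zero (mem_univ i) (by simp [hi]), mul_zero]

theorem alternatingCubeSum_eq_eval_zero {P : MvPolynomial σ R}
    (hP : ∀ u : σ → Bool, (u ≠ fun _ => false) → eval (cubePoint u) P = 0) :
    alternatingCubeSum P = eval 0 P := by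
  rw [alternatingCubeSum, sum_eq_single (fun _ => false) (fun u _ hu => by rw [hP u hu, mul_zero])
    (by simp)]
  have : cubePoint (R := R) (fun (_ : σ) => false) = 0 := by ext; simp [cubePoint]
  simp [cubeSign, this]

end MvPolynomial

open MvPolynomial

theorem alon_furedi {F : Type*} [Field F] {n : ℕ}
    (P : MvPolynomial (Fin n) F)
    (hvanish : ∀ u : Fin n → F, (∀ i, u i = 0 ∨ u i = 1) → u ≠ 0 →
      MvPolynomial.eval u P = 0)
    (horigin : MvPolynomial.eval (0 : Fin n → F) P ≠ 0) :
    n ≤ P.totalDegree := by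
  by_contra! hP
  have hcube (u : Fin n → Bool) (hu : u ≠ fun _ => false) : eval (cubePoint u) P = 0 :=
    hvanish _ (fun i => by by_cases h : u i <;> simp [cubePoint, h]) (cubePoint_ne_zero hu)
  apply horigin
  rw [← alternatingCubeSum_eq_eval_zero hcube]
  exact alternatingCubeSum_eq_zero_of_totalDegree_lt (by simpa using hP)
end

section
/- Let F be a field, r a nonnegative integer with r < n, and P ∈ F[X₁,…,Xₙ] a polynomial such that P(u) ≠ 0 for all u ∈ {0,1}ⁿ with wt(u) ≤ r, and P(v) = 0 for all v ∈ {0,1}ⁿ with wt(v) > r. Then deg(P) ≥ n − r. -/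
/-- The weight of a point of the hypercube: the number of coordinates equal to 1. -/
noncomputable def wt {F : Type*} [Field F] {n : ℕ} (u : Fin n → F) : ℕ :=
  Nat.card {i : Fin n // u i = 1}

open Finset MvPolynomial

lemma alt_sum_zero {F : Type*} [Field F] {α : Type*} [DecidableEq α] {s : Finset α}
    (hs : s.Nonempty) : ∑ T ∈ s.powerset, (-1 : F) ^ T.card = 0 := by
  have h := Finset.prod_add (fun _ : α => (-1 : F)) (fun _ => 1) s
  have h0 : ((-1 : F) + 1) = 0 := by ring
  simp only [h0, Finset.prod_const, Finset.prod_const_one, mul_one, one_pow] at h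
  rw [zero_pow hs.card_pos.ne'] at h
  exact h.symm

lemma sum_subsets_between {F : Type*} [Field F] {α : Type*} [DecidableEq α]
    {B s : Finset α} (hB : B ⊆ s) (hne : B ≠ s) :
    ∑ T ∈ s.powerset, (-1 : F) ^ T.card * (if B ⊆ T then 1 else 0) = 0 := by
  simp only [mul_ite, mul_one, mul_zero]
  rw [← Finset.sum_filter]
  have key := Finset.sum_nbij' (i := fun T => T \ B) (j := fun T' => T' ∪ B)
      (s := s.powerset.filter (fun T => B ⊆ T)) (t := (s \ B).powerset)
      (f := fun T => (-1 : F) ^ T.card) (g := fun T' => (-1 : F) ^ (B.card + T'.card))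
      ?_ ?_ ?_ ?_ ?_
  · rw [key]
    have h2 : ∑ T' ∈ (s \ B).powerset, (-1 : F) ^ (B.card + T'.card)
        = (-1 : F) ^ B.card * ∑ T' ∈ (s \ B).powerset, (-1 : F) ^ T'.card := by
      rw [Finset.mul_sum]
      exact Finset.sum_congr rfl fun T' _ => by rw [pow_add]
    rw [h2, alt_sum_zero, mul_zero]
    rw [Finset.sdiff_nonempty]
    intro h
    exact hne (Finset.Subset.antisymm hB h)
  · intro T hT
    simp only [Finset.mem_filter, Finset.mem_powerset] at hT ⊢
    exact Finset.sdiff_subset_sdiff hT.1 Finset.Subset.rfl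
  · intro T' hT'
    simp only [Finset.mem_filter, Finset.mem_powerset] at hT' ⊢
    exact ⟨Finset.union_subset (hT'.trans Finset.sdiff_subset) hB, Finset.subset_union_right⟩
  · intro T hT
    simp only [Finset.mem_filter, Finset.mem_powerset] at hT
    exact Finset.sdiff_union_of_subset hT.2
  · intro T' hT'
    simp only [Finset.mem_powerset] at hT'
    have hd : Disjoint T' B := Finset.disjoint_of_subset_left hT' Finset.sdiff_disjoint
    simp [Finset.union_sdiff_cancel_right hd]
  · intro T hT
    simp only [Finset.mem_filter, Finset.mem_powerset] at hT
    rw [Finset.card_sdiff_of_subset hT.2, ← Nat.add_sub_assoc (Finset.card_le_card hT.2),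
      Nat.add_sub_cancel_left]

theorem sziklai_weiner {F : Type*} [Field F] {n r : ℕ} (hr : r < n)
    (P : MvPolynomial (Fin n) F)
    (hlow : ∀ u : Fin n → F, (∀ i, u i = 0 ∨ u i = 1) → wt u ≤ r →
      MvPolynomial.eval u P ≠ 0)
    (hhigh : ∀ v : Fin n → F, (∀ i, v i = 0 ∨ v i = 1) → r < wt v →
      MvPolynomial.eval v P = 0) :
    n - r ≤ P.totalDegree := by
  classical
  by_contra hlt
  push_neg at hlt
  obtain ⟨A, -, hAcard⟩ := Finset.exists_subset_card_eq
    (show r ≤ (Finset.univ : Finset (Fin n)).card by simpa using hr.le)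
  set s : Finset (Fin n) := Aᶜ with hs
  have hscard : s.card = n - r := by
    simp [hs, Finset.card_compl, hAcard]
  set u : Finset (Fin n) → (Fin n → F) := fun T i => if i ∈ A ∪ T then 1 else 0 with hu
  have hu01 : ∀ T, ∀ i, u T i = 0 ∨ u T i = 1 := by
    intro T i
    by_cases h : i ∈ A ∪ T
    · right; simp only [hu]; rw [if_pos h]
    · left; simp only [hu]; rw [if_neg h]
  have hwt : ∀ T ⊆ s, wt (u T) = r + T.card := by
    intro T hT
    have h1 : ∀ i, u T i = 1 ↔ i ∈ A ∪ T := by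
      intro i
      constructor
      · intro hi
        by_contra hni
        simp only [hu] at hi
        rw [if_neg hni] at hi
        exact zero_ne_one hi
      · intro hi
        simp only [hu]
        rw [if_pos hi]
    have hd : Disjoint A T := by
      rw [Finset.disjoint_left]
      intro a ha haT
      exact (Finset.mem_compl.mp (hT haT)) ha
    unfold wt
    rw [Nat.card_eq_fintype_card, Fintype.card_subtype]
    have h2 : Finset.univ.filter (fun i => u T i = 1) = A ∪ T := by
      ext i; simp [h1]
    rw [h2, Finset.card_union_of_disjoint hd, hAcard]
  have key : ∑ T ∈ s.powerset, (-1 : F) ^ T.card * MvPolynomial.eval (u T) P = 0 := by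
    have step1 : ∀ T ∈ s.powerset, (-1 : F) ^ T.card * MvPolynomial.eval (u T) P
        = ∑ d ∈ P.support, P.coeff d *
            ((-1 : F) ^ T.card * (if d.support ∩ s ⊆ T then 1 else 0)) := by
      intro T hT
      rw [Finset.mem_powerset] at hT
      rw [eval_eq', Finset.mul_sum]
      refine Finset.sum_congr rfl fun d hd => ?_
      have hterm : ∀ i, u T i ^ d i = (if i ∈ A ∪ T ∨ d i = 0 then (1 : F) else 0) := by
        intro i
        by_cases hi : i ∈ A ∪ T
        · simp only [hu]
          rw [if_pos hi, if_pos (Or.inl hi), one_pow]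
        · by_cases hdi : d i = 0
          · simp only [hu]
            rw [if_neg hi, if_pos (Or.inr hdi), hdi, pow_zero]
          · simp only [hu]
            rw [if_neg hi, if_neg (by tauto), zero_pow hdi]
      have hprod : ∏ i, u T i ^ d i = (if d.support ∩ s ⊆ T then (1 : F) else 0) := by
        rw [Finset.prod_congr rfl (fun i _ => hterm i), Fintype.prod_boole]
        congr 1
        simp only [eq_iff_iff]
        constructor
        · intro h i hi
          rw [Finset.mem_inter] at hi
          rcases h i with h' | h'
          · rcases Finset.mem_union.mp h' with h'' | h''
            · exact absurd h'' (Finset.mem_compl.mp hi.2)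
            · exact h''
          · exact absurd h' (Finsupp.mem_support_iff.mp hi.1)
        · intro h i
          by_cases hdi : d i = 0
          · right; exact hdi
          · left
            by_cases hiA : i ∈ A
            · exact Finset.mem_union_left _ hiA
            · refine Finset.mem_union_right _ (h ?_)
              exact Finset.mem_inter.mpr ⟨Finsupp.mem_support_iff.mpr hdi,
                Finset.mem_compl.mpr hiA⟩
      rw [hprod]; ring
    rw [Finset.sum_congr rfl step1, Finset.sum_comm]
    apply Finset.sum_eq_zero
    intro d hd
    rw [← Finset.mul_sum, sum_subsets_between Finset.inter_subset_right ?_, mul_zero]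
    intro hBs
    have h1 : s.card ≤ d.support.card := by
      refine Finset.card_le_card fun i hi => ?_
      have := hBs ▸ hi
      exact (Finset.mem_inter.mp this).1
    have h2 : d.support.card ≤ d.sum fun _ e => e := by
      calc d.support.card = ∑ _i ∈ d.support, 1 := by simp
        _ ≤ ∑ i ∈ d.support, d i :=
          Finset.sum_le_sum fun i hi => Nat.one_le_iff_ne_zero.mpr (Finsupp.mem_support_iff.mp hi)
        _ = d.sum fun _ e => e := rfl
    have h3 := MvPolynomial.le_totalDegree hd
    omega
  have key2 : ∑ T ∈ s.powerset, (-1 : F) ^ T.card * MvPolynomial.eval (u T) P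
      = MvPolynomial.eval (u ∅) P := by
    rw [Finset.sum_eq_single (∅ : Finset (Fin n))]
    · simp
    · intro T hT hne
      rw [hhigh (u T) (hu01 T) ?_, mul_zero]
      rw [hwt T (Finset.mem_powerset.mp hT)]
      have : 0 < T.card := Finset.card_pos.mpr (Finset.nonempty_iff_ne_empty.mpr hne)
      omega
    · intro h
      exact absurd (Finset.empty_mem_powerset s) h
  have h0 : MvPolynomial.eval (u ∅) P ≠ 0 := by
    apply hlow (u ∅) (hu01 ∅)
    rw [hwt ∅ (Finset.empty_subset s)]
    simp
  exact h0 (key2 ▸ key)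
end

section
/- Let F be a field, k a nonnegative integer, and P ∈ F[X₁,…,Xₙ] a polynomial such that P(u) = 0 for all u ∈ {0,1}ⁿ with wt(u) ≤ k, and there exists v ∈ {0,1}ⁿ with wt(v) > k and P(v) ≠ 0. Then deg(P) > k. -/
open Finset MvPolynomial

namespace Finset

variable {α : Type*} [DecidableEq α]

theorem sum_Icc_neg_one_pow_card_of_ne {R : Type*} [Ring R] {s t : Finset α} (hst : s ≠ t) :
    ∑ u ∈ Icc s t, (-1 : R) ^ #u = 0 := by
  by_cases hs : s ⊆ t
  · have hne : (t \ s).Nonempty := sdiff_nonempty.mpr fun hts => hst (hs.antisymm hts)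
    have hinj : Set.InjOn (s ∪ ·) (t \ s).powerset := fun u hu v hv huv => by
      have hu : Disjoint s u := (disjoint_sdiff.mono_right (mem_powerset.mp hu))
      have hv : Disjoint s v := (disjoint_sdiff.mono_right (mem_powerset.mp hv))
      simpa [union_sdiff_cancel_left hu, union_sdiff_cancel_left hv] using congrArg (· \ s) huv
    rw [Icc_eq_image_powerset hs, sum_image hinj]
    calc ∑ u ∈ (t \ s).powerset, (-1 : R) ^ #(s ∪ u)
        = (-1 : R) ^ #s * ((∑ u ∈ (t \ s).powerset, (-1 : ℤ) ^ #u : ℤ) : R) := by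
          push_cast
          rw [mul_sum]
          refine sum_congr rfl fun u hu => ?_
          rw [card_union_of_disjoint (disjoint_sdiff.mono_right (mem_powerset.mp hu)), pow_add]
      _ = 0 := by rw [sum_powerset_neg_one_pow_card_of_nonempty hne, Int.cast_zero, mul_zero]
  · rw [Icc_eq_empty hs, sum_empty]

end Finset

section Indicator

variable {σ R : Type*}

theorem prod_indicator_pow [DecidableEq σ] [CommMonoidWithZero R] (T : Finset σ)
    (d : σ →₀ ℕ) :
    ∏ i ∈ d.support, (T : Set σ).indicator (1 : σ → R) i ^ d i =
      if d.support ⊆ T then 1 else 0 := by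
  split_ifs with h
  · exact prod_eq_one fun i hi => by simp [Set.indicator_of_mem (mem_coe.mpr (h hi))]
  · obtain ⟨i, hi, hiT⟩ := not_subset.mp h
    exact prod_eq_zero hi <| by
      simp [Set.indicator_of_notMem (mt mem_coe.mp hiT), Finsupp.mem_support_iff.mp hi]

theorem exists_eq_indicator_of_forall_eq_zero_or_eq_one [Fintype σ] [Zero R] [One R] {u : σ → R}
    (hu : ∀ i, u i = 0 ∨ u i = 1) : ∃ T : Finset σ, u = (T : Set σ).indicator 1 := by
  classical
  refine ⟨univ.filter (u · = 1), funext fun i => ?_⟩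
  rcases hu i with h | h <;> simp [Set.indicator_apply, h]

end Indicator

namespace MvPolynomial

variable {σ R : Type*} [CommRing R]

theorem card_support_le_totalDegree {p : MvPolynomial σ R} {d : σ →₀ ℕ}
    (hd : d ∈ p.support) :
    #d.support ≤ p.totalDegree :=
  calc #d.support = ∑ _ ∈ d.support, 1 := card_eq_sum_ones _
    _ ≤ d.sum fun _ e => e :=
      sum_le_sum fun _ hi => Nat.one_le_iff_ne_zero.mpr (Finsupp.mem_support_iff.mp hi)
    _ ≤ p.totalDegree := le_totalDegree hd

theorem sum_powerset_neg_one_pow_mul_eval_indicator {p : MvPolynomial σ R}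
    {S : Finset σ} (hp : p.totalDegree < #S) :
    ∑ T ∈ S.powerset, (-1 : R) ^ #T * eval ((T : Set σ).indicator 1) p = 0 := by
  classical
  simp_rw [eval_eq, prod_indicator_pow, mul_sum]
  rw [sum_comm]
  refine sum_eq_zero fun d hd => ?_
  have hdS : d.support ≠ S := fun h => (card_support_le_totalDegree hd).not_gt (h ▸ hp)
  calc ∑ T ∈ S.powerset, (-1 : R) ^ #T * (p.coeff d * if d.support ⊆ T then 1 else 0)
      = p.coeff d * ∑ T ∈ Icc d.support S, (-1 : R) ^ #T := by
        have hIcc : Icc d.support S = S.powerset.filter (d.support ⊆ ·) := by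
          ext; simp [and_comm]
        rw [hIcc, sum_filter, mul_sum]
        exact sum_congr rfl fun T _ => by split_ifs <;> ring
    _ = 0 := by rw [sum_Icc_neg_one_pow_card_of_ne hdS, mul_zero]

theorem eval_indicator_eq_zero_of_totalDegree_le {p : MvPolynomial σ R} {k : ℕ}
    (hp : p.totalDegree ≤ k)
    (hsmall : ∀ T : Finset σ, #T ≤ k → eval ((T : Set σ).indicator 1) p = 0)
    (S : Finset σ) : eval ((S : Set σ).indicator 1) p = 0 := by
  induction S using Finset.strongInduction with
  | H S ih =>
    by_cases hS : #S ≤ k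
    · exact hsmall S hS
    have hsum := sum_powerset_neg_one_pow_mul_eval_indicator (p := p) (S := S) (by omega)
    rwa [sum_eq_single_of_mem S (mem_powerset_self S) fun T hT hTS =>
      by rw [ih T (ssubset_of_subset_of_ne (mem_powerset.mp hT) hTS), mul_zero],
      neg_one_pow_mul_eq_zero_iff] at hsum

end MvPolynomial

theorem wt_indicator {F : Type*} [Field F] {n : ℕ} (T : Finset (Fin n)) :
    wt ((T : Set (Fin n)).indicator (1 : Fin n → F)) = #T := by
  classical
  rw [wt, ← Fintype.card_coe T, ← Nat.card_eq_fintype_card]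
  exact Nat.card_congr (Equiv.subtypeEquivRight fun i => by by_cases h : i ∈ T <;> simp [h])

theorem hegedus {F : Type*} [Field F] {n k : ℕ}
    (P : MvPolynomial (Fin n) F)
    (hvanish : ∀ u : Fin n → F, (∀ i, u i = 0 ∨ u i = 1) → wt u ≤ k →
      MvPolynomial.eval u P = 0)
    (hex : ∃ v : Fin n → F, (∀ i, v i = 0 ∨ v i = 1) ∧ k < wt v ∧
      MvPolynomial.eval v P ≠ 0) :
    k < P.totalDegree := by
  by_contra! hdeg
  obtain ⟨v, hv, -, hPv⟩ := hex
  obtain ⟨S, rfl⟩ := exists_eq_indicator_of_forall_eq_zero_or_eq_one hv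
  refine hPv (eval_indicator_eq_zero_of_totalDegree_le hdeg (fun T hT => ?_) S)
  exact hvanish _ (fun i => by by_cases h : i ∈ T <;> simp [h]) (by rwa [wt_indicator])
end

section
/- Let F be a field and P ∈ F[X₁,…,Xₙ] a polynomial that is not identically zero on {0,1}ⁿ. Let w = min{wt(u) : u ∈ {0,1}ⁿ, P(u) ≠ 0} and W = max{wt(u) : u ∈ {0,1}ⁿ, P(u) ≠ 0}. Then deg(P) ≥ max{w, n − W}. -/
open Finset MvPolynomial

section FiniteDifference

variable {σ R : Type*} [CommRing R] [DecidableEq σ]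

theorem sum_powerset_neg_one_pow_mul_piecewise_eq_zero {f : (σ → R) → R} {j : σ}
    (hf : ∀ z c, f (Function.update z j c) = f z) {A : Finset σ} (hj : j ∈ A) (x y : σ → R) :
    ∑ T ∈ A.powerset, (-1) ^ #T * f (T.piecewise y x) = 0 := by
  rw [← insert_erase hj, sum_powerset_insert (notMem_erase j A), ← sum_add_distrib]
  refine sum_eq_zero fun T hT => ?_
  have hjT : j ∉ T := fun h => notMem_erase j A (mem_powerset.1 hT h)
  rw [piecewise_insert, hf, card_insert_of_notMem hjT, pow_succ]
  ring

theorem exists_mem_notMem_support_of_totalDegree_lt {P : MvPolynomial σ R} {A : Finset σ}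
    (hA : P.totalDegree < #A) {d : σ →₀ ℕ} (hd : d ∈ P.support) : ∃ j ∈ A, j ∉ d.support := by
  by_contra! hsub
  have hcard : #d.support ≤ ∑ i ∈ d.support, d i := by
    simpa using card_nsmul_le_sum d.support d 1 fun i hi => Nat.one_le_iff_ne_zero.2
      (Finsupp.mem_support_iff.1 hi)
  have hdeg := le_totalDegree hd
  rw [Finsupp.sum] at hdeg
  have := card_le_card hsub
  omega

theorem sum_powerset_neg_one_pow_mul_eval_piecewise_eq_zero (P : MvPolynomial σ R)
    {A : Finset σ} (hA : P.totalDegree < #A) (x y : σ → R) :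
    ∑ T ∈ A.powerset, (-1) ^ #T * eval (T.piecewise y x) P = 0 := by
  simp only [eval_eq, mul_sum]
  rw [sum_comm]
  refine sum_eq_zero fun d hd => ?_
  obtain ⟨j, hjA, hjd⟩ := exists_mem_notMem_support_of_totalDegree_lt hA hd
  simp only [mul_left_comm _ (coeff d P), ← mul_sum]
  refine mul_eq_zero_of_right _ (sum_powerset_neg_one_pow_mul_piecewise_eq_zero
    (f := fun z => ∏ i ∈ d.support, z i ^ d i) ?_ hjA x y)
  intro z c
  refine prod_congr rfl fun i hi => ?_
  rw [Function.update_of_ne (ne_of_mem_of_not_mem hi hjd)]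

theorem card_le_totalDegree_of_eval_piecewise_ne_zero_unique (P : MvPolynomial σ R)
    {A T₀ : Finset σ} (hT₀ : T₀ ⊆ A) (x y : σ → R) (hne : eval (T₀.piecewise y x) P ≠ 0)
    (hzero : ∀ T ⊆ A, T ≠ T₀ → eval (T.piecewise y x) P = 0) :
    #A ≤ P.totalDegree := by
  by_contra! hA
  have hsum := sum_powerset_neg_one_pow_mul_eval_piecewise_eq_zero P hA x y
  rw [sum_eq_single_of_mem T₀ (mem_powerset.2 hT₀) fun T hT hne =>
    by rw [hzero T (mem_powerset.1 hT) hne, mul_zero]] at hsum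
  exact hne (((isUnit_neg_one).pow _).mul_right_eq_zero.1 hsum)

end FiniteDifference

section Hypercube

open scoped Classical

variable {F : Type*} [Field F] {n : ℕ}

theorem wt_eq_card_filter (u : Fin n → F) : wt u = #{i | u i = 1} := by
  rw [wt, Nat.card_eq_fintype_card, Fintype.card_subtype]

@[simp]
theorem wt_zero : wt (0 : Fin n → F) = 0 := by
  simp [wt_eq_card_filter]

theorem wt_piecewise_one (u : Fin n → F) {T : Finset (Fin n)} (hT : ∀ i ∈ T, u i ≠ 1) :
    wt (T.piecewise 1 u) = wt u + #T := by
  have hones : ({i | T.piecewise 1 u i = 1} : Finset (Fin n)) =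
      ({i | u i = 1} : Finset (Fin n)) ∪ T := by
    ext i
    by_cases hi : i ∈ T <;> simp [hi]
  rw [wt_eq_card_filter, wt_eq_card_filter, hones, card_union_of_disjoint]
  exact disjoint_left.2 fun i hi hiT => hT i hiT (mem_filter.1 hi).2

theorem piecewise_one_eq_zero_or_eq_one {u : Fin n → F} (hu : ∀ i, u i = 0 ∨ u i = 1)
    (T : Finset (Fin n)) : ∀ i, T.piecewise 1 u i = 0 ∨ T.piecewise 1 u i = 1 := by
  intro i
  by_cases hi : i ∈ T
  · simp [hi]
  · simpa [hi] using hu i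

theorem piecewise_filter_eq_one_one_zero {u : Fin n → F} (hu : ∀ i, u i = 0 ∨ u i = 1) :
    ({i | u i = 1} : Finset (Fin n)).piecewise 1 0 = u := by
  ext i
  rcases hu i with h | h <;> simp [piecewise, h]

theorem card_filter_eq_zero {u : Fin n → F} (hu : ∀ i, u i = 0 ∨ u i = 1) :
    #{i | u i = 0} = n - wt u := by
  have hne : ({i | u i = 1} : Finset (Fin n)) = ({i | ¬u i = 0} : Finset (Fin n)) := by
    ext i
    rcases hu i with h | h <;> simp [h]
  have hsplit := card_filter_add_card_filter_not (s := univ) fun i => u i = 0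
  rw [card_univ, Fintype.card_fin] at hsplit
  rw [wt_eq_card_filter, hne]
  omega

end Hypercube

theorem main_result {F : Type*} [Field F] {n w W : ℕ}
    (P : MvPolynomial (Fin n) F)
    (hw : IsLeast {m : ℕ | ∃ u : Fin n → F, (∀ i, u i = 0 ∨ u i = 1) ∧
      MvPolynomial.eval u P ≠ 0 ∧ wt u = m} w)
    (hW : IsGreatest {m : ℕ | ∃ u : Fin n → F, (∀ i, u i = 0 ∨ u i = 1) ∧
      MvPolynomial.eval u P ≠ 0 ∧ wt u = m} W) :
    max w (n - W) ≤ P.totalDegree := by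
  refine max_le ?_ ?_
  · obtain ⟨u, hu, hPu, rfl⟩ := hw.1
    rw [wt_eq_card_filter]
    refine card_le_totalDegree_of_eval_piecewise_ne_zero_unique P subset_rfl 0 1
      (by rwa [piecewise_filter_eq_one_one_zero hu]) fun T hT hTne => ?_
    by_contra hPT
    have hmin := hw.2 ⟨_, piecewise_one_eq_zero_or_eq_one (u := 0) (fun _ => .inl rfl) T, hPT, rfl⟩
    rw [wt_piecewise_one 0 fun _ _ => by simp, wt_zero, zero_add, wt_eq_card_filter] at hmin
    exact (card_lt_card (ssubset_of_subset_of_ne hT hTne)).not_ge hmin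
  · obtain ⟨u, hu, hPu, rfl⟩ := hW.1
    rw [← card_filter_eq_zero hu]
    refine card_le_totalDegree_of_eval_piecewise_ne_zero_unique P (empty_subset _) u 1
      (by simpa using hPu) fun T hT hTne => ?_
    by_contra hPT
    have hmax := hW.2 ⟨_, piecewise_one_eq_zero_or_eq_one hu T, hPT, rfl⟩
    have hT0 : ∀ i ∈ T, u i ≠ 1 := fun i hi => by
      have hi0 : u i = 0 := by simpa using hT hi
      simp [hi0]
    rw [wt_piecewise_one u hT0] at hmax
    have := card_pos.2 (nonempty_iff_ne_empty.2 hTne)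
    omega
end

section
/- Let F be a field, r < n, and let H₁,…,H_m be affine hyperplanes in Fⁿ that together cover every point u ∈ {0,1}ⁿ with wt(u) > r, while no H_i contains any point v ∈ {0,1}ⁿ with wt(v) ≤ r. Then m ≥ n − r. -/
open Finset MvPolynomial

lemma wt_indicator_s10 {F : Type*} [Field F] {n : ℕ} (W : Finset (Fin n)) :
    wt (fun j => if j ∈ W then (1:F) else 0) = W.card := by
  classical
  rw [wt, Nat.card_eq_fintype_card, Fintype.card_subtype]
  congr 1
  ext j
  by_cases h : j ∈ W <;> simp [h]

lemma alt_sum_powerset {F : Type*} [Field F] {α : Type*} [DecidableEq α] {x : Finset α}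
    (h0 : x.Nonempty) : (∑ s ∈ x.powerset, (-1 : F) ^ s.card) = 0 := by
  have := Finset.sum_powerset_neg_one_pow_card_of_nonempty (α := α) (x := x) h0
  have : ((∑ s ∈ x.powerset, (-1 : ℤ) ^ s.card : ℤ) : F) = 0 := by rw [this]; simp
  rw [← this]
  push_cast
  rfl

theorem hyperplane_cover_high_weight {F : Type*} [Field F] {n r m : ℕ} (hr : r < n)
    (f : Fin m → MvPolynomial (Fin n) F)
    (hdeg : ∀ i, (f i).totalDegree = 1)
    (hcover : ∀ u : Fin n → F, (∀ j, u j = 0 ∨ u j = 1) → r < wt u →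
      ∃ i, MvPolynomial.eval u (f i) = 0)
    (havoid : ∀ i, ∀ v : Fin n → F, (∀ j, v j = 0 ∨ v j = 1) → wt v ≤ r →
      MvPolynomial.eval v (f i) ≠ 0) :
    n - r ≤ m := by
  classical
  by_contra hm
  push_neg at hm
  -- choose a set T of size r
  obtain ⟨T, -, hTcard⟩ := Finset.exists_subset_card_eq (s := (univ : Finset (Fin n))) (n := r)
    (by simpa using hr.le)
  set P : MvPolynomial (Fin n) F := ∏ i, f i with hPdef
  have hPdeg : P.totalDegree ≤ m := by
    calc P.totalDegree ≤ ∑ i, (f i).totalDegree := totalDegree_finset_prod _ _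
    _ = m := by simp [hdeg]
  set ind : Finset (Fin n) → (Fin n → F) := fun W j => if j ∈ W then 1 else 0 with hind
  have hind01 : ∀ W, ∀ j, ind W j = 0 ∨ ind W j = 1 := by
    intro W j; by_cases h : j ∈ W <;> simp [ind, h]
  have hwt : ∀ W : Finset (Fin n), wt (ind W) = W.card := fun W => wt_indicator_s10 W
  have hTc : Tᶜ.card = n - r := by
    rw [Finset.card_compl, hTcard, Fintype.card_fin]
  -- the alternating sum over the subcube
  -- (1) it equals eval (ind T) P
  have hSne : ∑ s ∈ Tᶜ.powerset, (-1 : F)^s.card * eval (ind (T ∪ s)) P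
      = eval (ind T) P := by
    rw [Finset.sum_eq_single_of_mem ∅ (Finset.empty_mem_powerset _)]
    · simp
    · intro s hs hsne
      have hssub : s ⊆ Tᶜ := Finset.mem_powerset.1 hs
      have hdisj : Disjoint T s := (disjoint_compl_right).mono_right hssub
      have hwtu : r < wt (ind (T ∪ s)) := by
        rw [hwt, Finset.card_union_of_disjoint hdisj, hTcard]
        have : 0 < s.card := Finset.card_pos.2 (Finset.nonempty_iff_ne_empty.2 hsne)
        omega
      obtain ⟨i, hi⟩ := hcover (ind (T ∪ s)) (hind01 _) hwtu
      have : eval (ind (T ∪ s)) P = 0 := by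
        rw [hPdef, map_prod]
        exact Finset.prod_eq_zero (Finset.mem_univ i) hi
      rw [this, mul_zero]
  -- (2) eval (ind T) P ≠ 0
  have hPT : eval (ind T) P ≠ 0 := by
    rw [hPdef, map_prod]
    refine Finset.prod_ne_zero_iff.2 fun i _ => ?_
    exact havoid i (ind T) (hind01 T) (by rw [hwt, hTcard])
  -- (3) the alternating sum is 0 by the degree bound
  have hS0 : ∑ s ∈ Tᶜ.powerset, (-1 : F)^s.card * eval (ind (T ∪ s)) P = 0 := by
    have heval : ∀ s, eval (ind (T ∪ s)) P
        = ∑ α ∈ P.support, P.coeff α * ∏ j, (ind (T ∪ s)) j ^ α j :=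
      fun s => eval_eq' _ _
    calc ∑ s ∈ Tᶜ.powerset, (-1 : F)^s.card * eval (ind (T ∪ s)) P
        = ∑ s ∈ Tᶜ.powerset, ∑ α ∈ P.support,
            P.coeff α * ((-1 : F)^s.card * ∏ j, (ind (T ∪ s)) j ^ α j) := by
          refine Finset.sum_congr rfl fun s _ => ?_
          rw [heval s, Finset.mul_sum]
          exact Finset.sum_congr rfl fun α _ => by ring
      _ = ∑ α ∈ P.support, P.coeff α *
            ∑ s ∈ Tᶜ.powerset, (-1 : F)^s.card * ∏ j, (ind (T ∪ s)) j ^ α j := by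
          rw [Finset.sum_comm]
          exact Finset.sum_congr rfl fun α _ => by rw [Finset.mul_sum]
      _ = 0 := by
          refine Finset.sum_eq_zero fun α hα => ?_
          -- the inner alternating sum vanishes
          have hprod : ∀ s ∈ Tᶜ.powerset, (∏ j, (ind (T ∪ s)) j ^ α j)
              = if α.support \ T ⊆ s then (1:F) else 0 := by
            intro s hs
            by_cases hsub : α.support \ T ⊆ s
            · rw [if_pos hsub]
              refine Finset.prod_eq_one fun j _ => ?_
              by_cases hj : j ∈ T ∪ s
              · simp [ind, hj]
              · have hj0 : α j = 0 := by
                  by_contra h0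
                  have hjT : j ∉ T := fun hT => hj (Finset.mem_union_left s hT)
                  have hmem : j ∈ α.support \ T := Finset.mem_sdiff.2
                    ⟨Finsupp.mem_support_iff.2 h0, hjT⟩
                  exact hj (Finset.mem_union_right T (hsub hmem))
                simp [ind, hj, hj0]
            · rw [if_neg hsub]
              obtain ⟨j, hjmem, hjns⟩ := Finset.not_subset.1 hsub
              have hjT : j ∉ T := (Finset.mem_sdiff.1 hjmem).2
              have hjsupp : α j ≠ 0 := Finsupp.mem_support_iff.1 (Finset.mem_sdiff.1 hjmem).1
              refine Finset.prod_eq_zero (Finset.mem_univ j) ?_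
              have : ind (T ∪ s) j = 0 := by
                simp [ind, hjT, hjns]
              rw [this, zero_pow hjsupp]
          rw [Finset.sum_congr rfl fun s hs => by rw [hprod s hs]]
          -- now compute ∑_{s ⊆ Tᶜ} (-1)^|s| [A ⊆ s] where A = α.support \ T
          set A := α.support \ T with hA
          have hAsub : A ⊆ Tᶜ := by
            intro j hj
            exact Finset.mem_compl.2 (Finset.mem_sdiff.1 hj).2
          have hAcard : A.card < Tᶜ.card := by
            have h1 : A.card ≤ α.support.card := Finset.card_le_card Finset.sdiff_subset
            have h2 : α.support.card ≤ α.sum fun _ e => e := by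
              rw [Finsupp.sum]
              calc α.support.card = ∑ _j ∈ α.support, 1 := by simp
                _ ≤ ∑ j ∈ α.support, α j :=
                  Finset.sum_le_sum fun j hj => Nat.one_le_iff_ne_zero.2
                    (Finsupp.mem_support_iff.1 hj)
            have h3 : (α.sum fun _ e => e) ≤ P.totalDegree := le_totalDegree hα
            rw [hTc]; omega
          have hne : (Tᶜ \ A).Nonempty := by
            rw [← Finset.card_pos, Finset.card_sdiff_of_subset hAsub]; omega
          have key : ∑ s ∈ Tᶜ.powerset, (-1 : F)^s.card * (if A ⊆ s then (1:F) else 0)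
              = 0 := by
            rw [Finset.sum_congr rfl (fun s _ => by rw [mul_ite, mul_one, mul_zero]),
              Finset.sum_ite, Finset.sum_const, smul_zero, add_zero]
            have hbij : ∑ s ∈ Tᶜ.powerset.filter (fun s => A ⊆ s), (-1:F)^s.card
                = ∑ t ∈ (Tᶜ \ A).powerset, (-1:F)^(A.card + t.card) := by
              refine Finset.sum_nbij' (fun s => s \ A) (fun t => A ∪ t) ?_ ?_ ?_ ?_ ?_
              · intro s hs
                rw [Finset.mem_filter, Finset.mem_powerset] at hs
                exact Finset.mem_powerset.2 (Finset.sdiff_subset_sdiff hs.1 le_rfl)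
              · intro t ht
                rw [Finset.mem_powerset] at ht
                rw [Finset.mem_filter, Finset.mem_powerset]
                exact ⟨Finset.union_subset hAsub (ht.trans Finset.sdiff_subset),
                  Finset.subset_union_left⟩
              · intro s hs
                rw [Finset.mem_filter] at hs
                exact Finset.union_sdiff_of_subset hs.2
              · intro t ht
                rw [Finset.mem_powerset] at ht
                refine Finset.union_sdiff_cancel_left ?_
                exact Finset.disjoint_of_subset_right ht Finset.disjoint_sdiff
              · intro s hs
                rw [Finset.mem_filter] at hs
                have h1 := Finset.card_sdiff_add_card_eq_card hs.2
                have h2 := Finset.card_le_card hs.2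
                congr 1
                simp only [Finset.card_sdiff_of_subset hs.2]
                omega
            rw [hbij]
            have hfac : ∑ t ∈ (Tᶜ \ A).powerset, (-1:F)^(A.card + t.card)
                = (-1:F)^A.card * ∑ t ∈ (Tᶜ \ A).powerset, (-1:F)^t.card := by
              rw [Finset.mul_sum]
              exact Finset.sum_congr rfl fun t _ => pow_add _ _ _
            rw [hfac, alt_sum_powerset hne, mul_zero]
          rw [key, mul_zero]
  exact hPT (hSne ▸ hS0)
end
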